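/- Let Λ be an odd self-dual lattice in ℝⁿ with characteristic vector χ. If δ ∈ Λ is a vector satisfying δ/2 ∉ Λ ∪ S(Λ) and δ² ∈ 4ℤ, then there exists a characteristic vector χ' of Λ with (χ'·δ)/2 ≡ δ²/4 (mod 2). Namely, if χ itself fails this congruence, then χ + 2λ_o works for any λ_o ∈ Λ with δ·λ_o odd. -/
import Mathlib


open scoped BigOperators

namespace PaperFormal

/-- Standard dot product on `ℝⁿ`. -/
def dot {n : ℕ} (x y : Fin n → ℝ) : ℝ := ∑ i, x i * y i

/-- Squared norm. -/
def nsq {n : ℕ} (x : Fin n → ℝ) : ℝ := dot x x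

/-- The dual of a set of vectors: all vectors pairing integrally with every element. -/
def dualSet {n : ℕ} (L : Set (Fin n → ℝ)) : Set (Fin n → ℝ) :=
  {x | ∀ l ∈ L, ∃ k : ℤ, dot l x = (k : ℝ)}

/-- The even-norm part `Λ₀` of a lattice. -/
def evenSub {n : ℕ} (L : Set (Fin n → ℝ)) : Set (Fin n → ℝ) :=
  {l | l ∈ L ∧ ∃ k : ℤ, dot l l = 2 * (k : ℝ)}

/-- The shadow `S(Λ) = Λ₀* \ Λ`. -/
def shadow {n : ℕ} (L : Set (Fin n → ℝ)) : Set (Fin n → ℝ) :=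
  dualSet (evenSub L) \ L

/-- An odd self-dual lattice: equal to its dual, and containing a vector of odd norm. -/
def IsOddSelfDual {n : ℕ} (L : Set (Fin n → ℝ)) : Prop :=
  L = dualSet L ∧ ∃ v ∈ L, ∃ k : ℤ, dot v v = 2 * (k : ℝ) + 1

/-- `χ` is a characteristic vector of `L`: `λ·λ ≡ χ·λ (mod 2)` for all `λ ∈ L`. -/
def IsCharacteristic {n : ℕ} (L : Set (Fin n → ℝ)) (χ : Fin n → ℝ) : Prop :=
  χ ∈ L ∧ ∀ l ∈ L, ∃ k : ℤ, dot l l - dot χ l = 2 * (k : ℝ)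

/-- `Λ_{δ-even}`. -/
def deltaEven {n : ℕ} (L : Set (Fin n → ℝ)) (δ : Fin n → ℝ) : Set (Fin n → ℝ) :=
  {l | l ∈ L ∧ ∃ k : ℤ, dot δ l = 2 * (k : ℝ)}

/-- `Λ_{δ-odd}`. -/
def deltaOdd {n : ℕ} (L : Set (Fin n → ℝ)) (δ : Fin n → ℝ) : Set (Fin n → ℝ) :=
  {l | l ∈ L ∧ ∃ k : ℤ, dot δ l = 2 * (k : ℝ) + 1}

/-- Translate a set of vectors by `v`. -/
def shiftSet {n : ℕ} (A : Set (Fin n → ℝ)) (v : Fin n → ℝ) : Set (Fin n → ℝ) :=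
  (fun x => x + v) '' A

/-- The orbifold lattice `Λ⁺ = Λ_even ∪ (Λ_even + δ/2)`. -/
def orbPlus {n : ℕ} (L : Set (Fin n → ℝ)) (δ : Fin n → ℝ) : Set (Fin n → ℝ) :=
  deltaEven L δ ∪ shiftSet (deltaEven L δ) ((2 : ℝ)⁻¹ • δ)

/-- The orbifold lattice `Λ⁻ = Λ_even ∪ (Λ_odd + δ/2)`. -/
def orbMinus {n : ℕ} (L : Set (Fin n → ℝ)) (δ : Fin n → ℝ) : Set (Fin n → ℝ) :=
  deltaEven L δ ∪ shiftSet (deltaOdd L δ) ((2 : ℝ)⁻¹ • δ)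

/-- The gauging condition for a shift vector: `δ ∈ Λ`, `δ/2 ∉ Λ ∪ S(Λ)`, `δ² ∈ 4ℤ`. -/
def GaugingCondition {n : ℕ} (L : Set (Fin n → ℝ)) (δ : Fin n → ℝ) : Prop :=
  δ ∈ L ∧ (2 : ℝ)⁻¹ • δ ∉ L ∧ (2 : ℝ)⁻¹ • δ ∉ shadow L ∧
    ∃ k : ℤ, dot δ δ = 4 * (k : ℝ)

/-- Inner product of codewords, valued in `ℤ/k`. -/
def codeDot {n k : ℕ} (c c' : Fin n → ZMod k) : ZMod k := ∑ i, c i * c' i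

/-- The dual code. -/
def dualCode {n k : ℕ} (C : Set (Fin n → ZMod k)) : Set (Fin n → ZMod k) :=
  {x | ∀ c ∈ C, codeDot c x = 0}

/-- Hamming weight of a binary codeword. -/
def wt {n : ℕ} (c : Fin n → ZMod 2) : ℕ :=
  (Finset.univ.filter fun i => c i = 1).card

/-- A singly-even self-dual binary code: self-dual, with some codeword of weight `≢ 0 (mod 4)`. -/
def IsSinglyEvenSelfDual {n : ℕ} (C : Set (Fin n → ZMod 2)) : Prop :=
  C = dualCode C ∧ ∃ c ∈ C, ¬ (4 ∣ wt c)

/-- Lift of a binary codeword to `{0,1}ⁿ ⊆ ℝⁿ`. -/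
def liftBin {n : ℕ} (c : Fin n → ZMod 2) : Fin n → ℝ := fun i => ((c i).val : ℝ)

/-- Construction A lattice of a binary code: `Λ(C) = {(c + 2m)/√2}`. -/
def constructionA {n : ℕ} (C : Set (Fin n → ZMod 2)) : Set (Fin n → ℝ) :=
  {x | ∃ c ∈ C, ∃ m : Fin n → ℤ,
    x = fun i => (liftBin c i + 2 * (m i : ℝ)) / Real.sqrt 2}

/-- Construction A lattice of a `ℤ/k` code: `Λ(C) = {(c + km)/√k}`. -/
def constructionAZ {n : ℕ} (k : ℕ) (C : Set (Fin n → ZMod k)) : Set (Fin n → ℝ) :=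
  {x | ∃ c ∈ C, ∃ m : Fin n → ℤ,
    x = fun i => (((c i).val : ℝ) + (k : ℝ) * (m i : ℝ)) / Real.sqrt k}

/-- The shift vector `δ = (1,…,1)/√2`. -/
noncomputable def deltaAll (n : ℕ) : Fin n → ℝ := fun _ => 1 / Real.sqrt 2

/-- Theta function of a set of vectors, `Θ_L(q) = Σ_{λ∈L} q^{λ²/2}`. -/
noncomputable def thetaSet {n : ℕ} (L : Set (Fin n → ℝ)) (q : ℝ) : ℝ :=
  ∑' l : L, q ^ (dot (l : Fin n → ℝ) (l : Fin n → ℝ) / 2)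

/-- Jacobi theta function `θ₂(q) = Σ_m q^{(m+1/2)²/2}`. -/
noncomputable def theta2 (q : ℝ) : ℝ := ∑' m : ℤ, q ^ (((m : ℝ) + 1 / 2) ^ 2 / 2)

/-- Jacobi theta function `θ₃(q) = Σ_m q^{m²/2}`. -/
noncomputable def theta3 (q : ℝ) : ℝ := ∑' m : ℤ, q ^ ((m : ℝ) ^ 2 / 2)

/-- Jacobi theta function `θ₄(q) = Σ_m (−1)^m q^{m²/2}`. -/
noncomputable def theta4 (q : ℝ) : ℝ := ∑' m : ℤ, (-1 : ℝ) ^ m * q ^ ((m : ℝ) ^ 2 / 2)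

/-- `ℤⁿ₊`: integer vectors with even coordinate sum. -/
def intEven (n : ℕ) : Set (Fin n → ℤ) := {m | Even (∑ i, m i)}

/-- `ℤⁿ₋`: integer vectors with odd coordinate sum. -/
def intOdd (n : ℕ) : Set (Fin n → ℤ) := {m | Odd (∑ i, m i)}

/-- The doubly-even subcode `C₀` of a binary code. -/
def doublyEvenSub {n : ℕ} (C : Set (Fin n → ZMod 2)) : Set (Fin n → ZMod 2) :=
  {c | c ∈ C ∧ wt c % 4 = 0}

/-- The code shadow `S(C) = C₀⊥ \ C`. -/
def codeShadow {n : ℕ} (C : Set (Fin n → ZMod 2)) : Set (Fin n → ZMod 2) :=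
  dualCode (doublyEvenSub C) \ C

lemma dot_comm' {n : ℕ} (x y : Fin n → ℝ) : dot x y = dot y x := by
  simp [dot, mul_comm]

lemma dot_add_right {n : ℕ} (x y z : Fin n → ℝ) :
    dot x (y + z) = dot x y + dot x z := by
  simp [dot, mul_add, Finset.sum_add_distrib]

lemma dot_smul_right {n : ℕ} (c : ℝ) (x y : Fin n → ℝ) :
    dot x (c • y) = c * dot x y := by
  simp [dot, Finset.mul_sum, mul_left_comm]

/-- existence of a characteristic vector with `(χ'·δ)/2 ≡ δ²/4 (mod 2)`;
if `χ` itself fails the congruence, then `χ + 2λ_o` works for any `λ_o ∈ Λ_odd`. -/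
theorem exists_characteristic_with_congruence {n : ℕ} (L : Set (Fin n → ℝ))
    (hL : IsOddSelfDual L) (χ : Fin n → ℝ) (hχ : IsCharacteristic L χ)
    (δ : Fin n → ℝ) (hδ : GaugingCondition L δ) :
    (∃ χ' : Fin n → ℝ, IsCharacteristic L χ' ∧
        ∃ k : ℤ, dot χ' δ / 2 - dot δ δ / 4 = 2 * (k : ℝ)) ∧
    ((¬ ∃ k : ℤ, dot χ δ / 2 - dot δ δ / 4 = 2 * (k : ℝ)) →
      ∀ lam_o ∈ deltaOdd L δ, IsCharacteristic L (χ + (2 : ℝ) • lam_o) ∧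
        ∃ k : ℤ, dot (χ + (2 : ℝ) • lam_o) δ / 2 - dot δ δ / 4 = 2 * (k : ℝ)) := by
  obtain ⟨hdual, -⟩ := hL
  obtain ⟨hχL, hχchar⟩ := hχ
  obtain ⟨hδL, hδ2L, hδ2S, j, hj⟩ := hδ
  -- any two lattice vectors pair integrally
  have pair : ∀ x ∈ L, ∀ y ∈ L, ∃ k : ℤ, dot x y = (k : ℝ) := by
    intro x hx y hy
    have hy' : y ∈ dualSet L := hdual ▸ hy
    exact hy' x hx
  -- existence of a δ-odd vector
  have hodd : ∃ lam ∈ L, ∃ a : ℤ, dot δ lam = 2 * (a : ℝ) + 1 := by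
    by_contra h
    push_neg at h
    have hmem : (2 : ℝ)⁻¹ • δ ∈ dualSet (evenSub L) := by
      intro l hl
      obtain ⟨t, ht⟩ := pair l hl.1 δ hδL
      rcases Int.even_or_odd t with ⟨a, ha⟩ | ⟨a, ha⟩
      · refine ⟨a, ?_⟩
        rw [dot_smul_right, ht, ha]
        push_cast; ring
      · exact absurd (by rw [dot_comm', ht, ha]; push_cast; ring)
          (h l hl.1 a)
    exact hδ2S ⟨hmem, hδ2L⟩
  obtain ⟨m, hm⟩ := hχchar δ hδL
  have hχδ : dot χ δ = 4 * (j : ℝ) - 2 * (m : ℝ) := by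
    rw [dot_comm'] at hm; linarith [hj]
  -- χ + 2λ is characteristic for any λ ∈ L
  have charShift : ∀ lam ∈ L, IsCharacteristic L (χ + (2 : ℝ) • lam) := by
    intro lam hlam
    constructor
    · rw [hdual]
      intro l hl
      obtain ⟨k1, hk1⟩ := pair l hl χ hχL
      obtain ⟨k2, hk2⟩ := pair l hl lam hlam
      refine ⟨k1 + 2 * k2, ?_⟩
      rw [dot_add_right, dot_smul_right, hk1, hk2]
      push_cast; ring
    · intro l hl
      obtain ⟨k, hk⟩ := hχchar l hl
      obtain ⟨k2, hk2⟩ := pair l hl lam hlam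
      refine ⟨k - k2, ?_⟩
      have h1 : dot (χ + (2 : ℝ) • lam) l = dot l χ + 2 * dot l lam := by
        rw [dot_comm' (χ + (2 : ℝ) • lam) l, dot_add_right, dot_smul_right]
      rw [h1, hk2]
      rw [dot_comm' χ l] at hk
      push_cast; linarith
  -- the value for χ itself
  have hχcase : ∀ k : ℤ, j - m = 2 * k →
      dot χ δ / 2 - dot δ δ / 4 = 2 * (k : ℝ) := by
    intro k hk
    have hr : (j : ℝ) - (m : ℝ) = 2 * (k : ℝ) := by exact_mod_cast hk
    rw [hχδ, hj]; linarith
  -- the value for χ + 2λ_o when j - m is odd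
  have core : Odd (j - m) → ∀ lam ∈ L, (∃ a : ℤ, dot δ lam = 2 * (a : ℝ) + 1) →
      ∃ k : ℤ, dot (χ + (2 : ℝ) • lam) δ / 2 - dot δ δ / 4 = 2 * (k : ℝ) := by
    rintro ⟨t, ht⟩ lam _ ⟨a, ha⟩
    refine ⟨t + a + 1, ?_⟩
    have h1 : dot (χ + (2 : ℝ) • lam) δ = dot χ δ + 2 * dot δ lam := by
      rw [dot_comm' (χ + (2 : ℝ) • lam) δ, dot_add_right, dot_smul_right,
        dot_comm' δ χ]
    have hrt : (j : ℝ) - (m : ℝ) = 2 * (t : ℝ) + 1 := by exact_mod_cast ht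
    rw [h1, hχδ, ha, hj]
    push_cast; linarith
  constructor
  · rcases Int.even_or_odd (j - m) with ⟨k, hk⟩ | hoddjm
    · exact ⟨χ, ⟨hχL, hχchar⟩, k, hχcase k (by omega)⟩
    · obtain ⟨lam, hlamL, ha⟩ := hodd
      exact ⟨χ + (2 : ℝ) • lam, charShift lam hlamL, core hoddjm lam hlamL ha⟩
  · intro hnot lam hlam
    obtain ⟨hlamL, a, ha⟩ := hlam
    have hoddjm : Odd (j - m) := by
      rcases Int.even_or_odd (j - m) with ⟨k, hk⟩ | hoddjm
      · exact absurd ⟨k, hχcase k (by omega)⟩ hnot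
      · exact hoddjm
    exact ⟨charShift lam hlamL, core hoddjm lam hlamL ⟨a, ha⟩⟩

end PaperFormal
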